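/- Let X_0 be a real-valued random variable such that 0 < G(r) < ∞ for every r ≥ 0 and such that for every ε > 0, G(r+ε)/G(r) → 0 as r → ∞. Writing m_r := E[U_r(X_0)] and Y_{0,r} := U_r(X_0) − m_r, one has for every ε > 0 that E[Y_{0,r}² · 1(|Y_{0,r}| ≥ ε)] = o(G(r)) as r → ∞. -/

import Mathlib

open MeasureTheory ProbabilityTheory Filter Asymptotics
open scoped ENNReal Topology NNReal

noncomputable section

/-- The shrinking operator `U_r : ℝ → ℝ` (for `r ≥ 0`):
`U_r(x) = x - r` if `x > r`, `0` if `|x| ≤ r`, and `x + r` if `x < -r`. -/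
def shrink (r x : ℝ) : ℝ := if r < x then x - r else if x < -r then x + r else 0

variable {Ω : Type*}

/-- `G(r) := ∫₀^∞ t · P(|X| > t + r) dt`. -/
def Gfun [MeasurableSpace Ω] (P : Measure Ω) (X : Ω → ℝ) (r : ℝ) : ℝ≥0∞ :=
  ∫⁻ t in Set.Ioi (0 : ℝ), ENNReal.ofReal t * P {ω | t + r < |X ω|}

/-- Strict stationarity of a two-sided sequence of random variables: for all `j, l ∈ ℤ`
and `m ≥ 0`, the random vectors `(X_j, …, X_{j+m})` and `(X_l, …, X_{l+m})` have the
same distribution. -/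
def StrictlyStationary [MeasurableSpace Ω] (P : Measure Ω) (X : ℤ → Ω → ℝ) : Prop :=
  ∀ (j l : ℤ) (m : ℕ),
    Measure.map (fun ω => fun i : Fin (m + 1) => X (j + i) ω) P =
    Measure.map (fun ω => fun i : Fin (m + 1) => X (l + i) ω) P

/-- The correlation coefficient of two real random variables. -/
def corr [MeasurableSpace Ω] (P : Measure Ω) (f g : Ω → ℝ) : ℝ :=
  (∫ ω, (f ω - ∫ x, f x ∂P) * (g ω - ∫ x, g x ∂P) ∂P) /
    (Real.sqrt (∫ ω, (f ω - ∫ x, f x ∂P) ^ 2 ∂P) *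
      Real.sqrt (∫ ω, (g ω - ∫ x, g x ∂P) ^ 2 ∂P))

/-- The maximal correlation coefficient `ρ(𝒜, ℬ)`: the supremum of `|Corr(f,g)|` over
square-integrable `f` measurable w.r.t. `𝒜` and `g` measurable w.r.t. `ℬ`. -/
def maxCorr [mΩ : MeasurableSpace Ω] (P : Measure Ω) (A B : MeasurableSpace Ω) : ℝ :=
  sSup { c | ∃ f g : Ω → ℝ, Measurable[A] f ∧ Measurable[B] g ∧
    MemLp f 2 P ∧ MemLp g 2 P ∧ c = |@corr Ω mΩ P f g| }

/-- The strong mixing coefficient `α(𝒜, ℬ)`. -/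
def alphaMix [MeasurableSpace Ω] (P : Measure Ω) (A B : MeasurableSpace Ω) : ℝ :=
  sSup { c | ∃ s t : Set Ω, MeasurableSet[A] s ∧ MeasurableSet[B] t ∧
    c = |(P (s ∩ t)).toReal - (P s).toReal * (P t).toReal| }

/-- The σ-field generated by the random variables `X k`, `k ∈ S`. -/
def genFrom [MeasurableSpace Ω] (X : ℤ → Ω → ℝ) (S : Set ℤ) : MeasurableSpace Ω :=
  ⨆ k ∈ S, MeasurableSpace.comap (X k) inferInstance

/-- `ρ(n) = ρ(σ(X_k, k ≤ 0), σ(X_k, k ≥ n))`. -/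
def rhoCoef [MeasurableSpace Ω] (P : Measure Ω) (X : ℤ → Ω → ℝ) (n : ℕ) : ℝ :=
  maxCorr P (genFrom X {k | k ≤ 0}) (genFrom X {k | (n : ℤ) ≤ k})

/-- `α(n) = α(σ(X_k, k ≤ 0), σ(X_k, k ≥ n))`. -/
def alphaCoef [MeasurableSpace Ω] (P : Measure Ω) (X : ℤ → Ω → ℝ) (n : ℕ) : ℝ :=
  alphaMix P (genFrom X {k | k ≤ 0}) (genFrom X {k | (n : ℤ) ≤ k})

/-- `ρ*(n)`: the supremum of `ρ(σ(X_k, k ∈ S), σ(X_k, k ∈ T))` over all pairs of nonempty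
disjoint `S, T ⊆ ℤ` with `dist(S,T) ≥ n`. -/
def rhoStarCoef [MeasurableSpace Ω] (P : Measure Ω) (X : ℤ → Ω → ℝ) (n : ℕ) : ℝ :=
  sSup { c | ∃ S T : Set ℤ, S.Nonempty ∧ T.Nonempty ∧ Disjoint S T ∧
    (∀ s ∈ S, ∀ t ∈ T, (n : ℤ) ≤ |s - t|) ∧
    c = maxCorr P (genFrom X S) (genFrom X T) }

/-- `Y_{k,r} := U_r(X_k) - E[U_r(X_0)]`. -/
def Ymix [MeasurableSpace Ω] (P : Measure Ω) (X : ℤ → Ω → ℝ) (k : ℤ) (r : ℝ) (ω : Ω) : ℝ :=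
  shrink r (X k ω) - ∫ ω', shrink r (X 0 ω') ∂P

/-! Since `|U_r(x)| = (|x| - r)⁺`, the layer-cake formula gives `E[U_r(X₀)²] = 2 G(r)`, and
`m_r → 0` by dominated convergence. Once `|m_r| ≤ ε/2`, the event `|Y_{0,r}| ≥ ε` forces
`|X₀| - r ≥ ε/2`, and there `|Y_{0,r}| ≤ 4 |U_{r+ε/4}(X₀)|`. Hence the truncated second moment is
at most `32 G(r + ε/4)`, which is `o(G(r))` by the ratio hypothesis. -/

lemma measurable_shrink (r : ℝ) : Measurable (shrink r) :=
  Measurable.ite (measurableSet_lt measurable_const measurable_id)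
    (measurable_id.sub measurable_const)
    (Measurable.ite (measurableSet_lt measurable_id measurable_const)
      (measurable_id.add measurable_const) measurable_const)

lemma shrink_zero_left (x : ℝ) : shrink 0 x = x := by
  unfold shrink
  split_ifs <;> linarith

lemma shrink_eq_zero_of_abs_le {r x : ℝ} (h : |x| ≤ r) : shrink r x = 0 := by
  unfold shrink
  rw [abs_le] at h
  split_ifs <;> linarith

lemma abs_shrink {r : ℝ} (hr : 0 ≤ r) (x : ℝ) : |shrink r x| = max (|x| - r) 0 := by
  unfold shrink
  split_ifs with h₁ h₂
  · rw [abs_of_nonneg (by linarith : 0 ≤ x - r), abs_of_pos (by linarith : 0 < x),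
      max_eq_left (by linarith)]
  · rw [abs_of_neg (by linarith : x + r < 0), abs_of_neg (by linarith : x < 0),
      max_eq_left (by linarith)]
    ring
  · rw [abs_zero, max_eq_right (by rw [sub_nonpos, abs_le]; constructor <;> linarith)]

lemma lt_abs_shrink_iff {r t x : ℝ} (hr : 0 ≤ r) (ht : 0 < t) :
    t < |shrink r x| ↔ t + r < |x| := by
  rw [abs_shrink hr, lt_max_iff]
  constructor
  · rintro (h | h) <;> linarith
  · intro h
    left
    linarith

lemma abs_shrink_le {r : ℝ} (hr : 0 ≤ r) (x : ℝ) : |shrink r x| ≤ |x| := by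
  rw [abs_shrink hr]
  exact max_le (by linarith) (abs_nonneg x)

lemma abs_shrink_sub_le_four_mul {r ε m x : ℝ} (hr : 0 ≤ r) (hε : 0 < ε) (hm : |m| ≤ ε / 2)
    (hx : ε ≤ |shrink r x - m|) : |shrink r x - m| ≤ 4 * |shrink (r + ε / 4) x| := by
  have htri : |shrink r x - m| ≤ |shrink r x| + |m| := abs_sub _ _
  rw [abs_shrink hr] at htri
  have hfar : ε / 2 ≤ |x| - r := by
    rcases max_cases (|x| - r) 0 with ⟨h, _⟩ | ⟨h, _⟩ <;> linarith
  rw [abs_shrink (by linarith), max_eq_left (by linarith)]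
  rw [max_eq_left (by linarith)] at htri
  linarith

lemma sq_shrink_sub_le {r ε m x : ℝ} (hr : 0 ≤ r) (hε : 0 < ε) (hm : |m| ≤ ε / 2)
    (hx : ε ≤ |shrink r x - m|) : (shrink r x - m) ^ 2 ≤ 16 * shrink (r + ε / 4) x ^ 2 := by
  have h := abs_shrink_sub_le_four_mul hr hε hm hx
  rw [← abs_of_pos (by norm_num : (0 : ℝ) < 4), ← abs_mul] at h
  linarith [sq_le_sq.mpr h]

section Moments

variable [MeasurableSpace Ω] {P : Measure Ω} {X : Ω → ℝ} {r : ℝ}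

lemma lintegral_shrink_sq (hX : Measurable X) (hr : 0 ≤ r) :
    ∫⁻ ω, ENNReal.ofReal (shrink r (X ω) ^ 2) ∂P = 2 * Gfun P X r := by
  have hsq : ∀ ω, shrink r (X ω) ^ 2 = |shrink r (X ω)| ^ (2 : ℝ) := fun ω => by
    rw [Real.rpow_two, sq_abs]
  simp_rw [hsq]
  rw [lintegral_rpow_eq_lintegral_meas_lt_mul P (f := fun ω => |shrink r (X ω)|)
    (Eventually.of_forall fun ω => abs_nonneg _)
    ((measurable_shrink r).comp hX).abs.aemeasurable two_pos, Gfun, ENNReal.ofReal_ofNat]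
  congr 1
  refine setLIntegral_congr_fun measurableSet_Ioi fun t ht => ?_
  simp only [lt_abs_shrink_iff hr (Set.mem_Ioi.mp ht)]
  rw [show (2 : ℝ) - 1 = 1 by norm_num, Real.rpow_one, mul_comm]

lemma integral_shrink_sq (hX : Measurable X) (hr : 0 ≤ r) :
    ∫ ω, shrink r (X ω) ^ 2 ∂P = 2 * (Gfun P X r).toReal := by
  rw [integral_eq_lintegral_of_nonneg_ae (f := fun ω => shrink r (X ω) ^ 2)
    (Eventually.of_forall fun ω => sq_nonneg _)
    ((measurable_shrink r).comp hX |>.pow_const 2).aestronglyMeasurable,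
    lintegral_shrink_sq hX hr, ENNReal.toReal_mul, ENNReal.toReal_ofNat]

lemma integrable_shrink_sq (hX : Measurable X) (hr : 0 ≤ r) (hG : Gfun P X r ≠ ∞) :
    Integrable (fun ω => shrink r (X ω) ^ 2) P := by
  refine ⟨(((measurable_shrink r).comp hX).pow_const 2).aestronglyMeasurable, ?_⟩
  rw [hasFiniteIntegral_iff_ofReal (Eventually.of_forall fun ω => sq_nonneg _),
    lintegral_shrink_sq hX hr]
  exact ENNReal.mul_lt_top ENNReal.ofNat_lt_top hG.lt_top

lemma memLp_two_of_Gfun_zero_ne_top (hX : Measurable X) (hG : Gfun P X 0 ≠ ∞) :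
    MemLp X 2 P := by
  rw [memLp_two_iff_integrable_sq hX.aestronglyMeasurable]
  simpa only [shrink_zero_left] using integrable_shrink_sq hX le_rfl hG

lemma tendsto_integral_shrink_atTop (hX : Integrable X P) :
    Tendsto (fun r => ∫ ω, shrink r (X ω) ∂P) atTop (𝓝 0) := by
  rw [← integral_zero Ω ℝ]
  refine tendsto_integral_filter_of_dominated_convergence (fun ω => |X ω|)
    (Eventually.of_forall fun r =>
      ((measurable_shrink r).comp_aemeasurable hX.aemeasurable).aestronglyMeasurable)
    ?_ hX.abs (Eventually.of_forall fun ω => ?_)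
  · filter_upwards [eventually_ge_atTop 0] with r hr
    exact Eventually.of_forall fun ω => abs_shrink_le hr (X ω)
  · refine tendsto_const_nhds.congr' ?_
    filter_upwards [eventually_ge_atTop |X ω|] with r hr
    exact (shrink_eq_zero_of_abs_le hr).symm

lemma setIntegral_sq_shrink_sub_le (hX : Measurable X) (hr : 0 ≤ r) {ε m : ℝ} (hε : 0 < ε)
    (hm : |m| ≤ ε / 2) (hG : Gfun P X (r + ε / 4) ≠ ∞) :
    ∫ ω in {ω | ε ≤ |shrink r (X ω) - m|}, (shrink r (X ω) - m) ^ 2 ∂P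
      ≤ 32 * (Gfun P X (r + ε / 4)).toReal := by
  have hr' : 0 ≤ r + ε / 4 := by linarith
  have hint : Integrable (fun ω => 16 * shrink (r + ε / 4) (X ω) ^ 2) P :=
    (integrable_shrink_sq hX hr' hG).const_mul 16
  have hset : MeasurableSet {ω | ε ≤ |shrink r (X ω) - m|} :=
    measurableSet_le measurable_const (((measurable_shrink r).comp hX).sub_const m).abs
  calc ∫ ω in {ω | ε ≤ |shrink r (X ω) - m|}, (shrink r (X ω) - m) ^ 2 ∂P
      ≤ ∫ ω in {ω | ε ≤ |shrink r (X ω) - m|}, 16 * shrink (r + ε / 4) (X ω) ^ 2 ∂P :=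
        integral_mono_of_nonneg (Eventually.of_forall fun ω => sq_nonneg _) hint.integrableOn
          (ae_restrict_of_forall_mem hset fun ω hω => sq_shrink_sub_le hr hε hm hω)
    _ ≤ ∫ ω, 16 * shrink (r + ε / 4) (X ω) ^ 2 ∂P :=
        setIntegral_le_integral hint (Eventually.of_forall fun ω => by positivity)
    _ = 32 * (Gfun P X (r + ε / 4)).toReal := by
        rw [integral_const_mul, integral_shrink_sq hX hr']
        ring

end Moments

/-- **Lemma 4.1 (eq. (4.6)).** For every `ε > 0`,
`E[Y_{0,r}² · 1(|Y_{0,r}| ≥ ε)] = o(G(r))` as `r → ∞`, where `Y_{0,r} = U_r(X_0) - m_r`. -/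
theorem centered_truncated_second_moment_littleO
    [MeasurableSpace Ω] (P : Measure Ω) [IsProbabilityMeasure P]
    (X₀ : Ω → ℝ) (hmeas : Measurable X₀)
    (hG : ∀ r : ℝ, 0 ≤ r → 0 < Gfun P X₀ r ∧ Gfun P X₀ r < ∞)
    (hGratio : ∀ ε : ℝ, 0 < ε →
      Tendsto (fun r : ℝ => (Gfun P X₀ (r + ε)).toReal / (Gfun P X₀ r).toReal)
        atTop (𝓝 0)) :
    ∀ ε : ℝ, 0 < ε →
      (fun r : ℝ =>
          ∫ ω in {ω | ε ≤ |shrink r (X₀ ω) - ∫ ω', shrink r (X₀ ω') ∂P|},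
            (shrink r (X₀ ω) - ∫ ω', shrink r (X₀ ω') ∂P) ^ 2 ∂P)
        =o[atTop] fun r : ℝ => (Gfun P X₀ r).toReal := by
  intro ε hε
  have hX : Integrable X₀ P :=
    (memLp_two_of_Gfun_zero_ne_top hmeas (hG 0 le_rfl).2.ne).integrable one_le_two
  have hmean : ∀ᶠ r in atTop, |∫ ω, shrink r (X₀ ω) ∂P| ≤ ε / 2 :=
    (tendsto_integral_shrink_atTop hX).abs.eventually
      (ge_mem_nhds (by rw [abs_zero]; positivity))
  have hshift : (fun r => (Gfun P X₀ (r + ε / 4)).toReal) =o[atTop]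
      fun r => (Gfun P X₀ r).toReal := by
    refine (isLittleO_iff_tendsto' ?_).mpr (hGratio _ (by positivity))
    filter_upwards [eventually_ge_atTop 0] with r hr hzero
    exact absurd hzero (ENNReal.toReal_ne_zero.mpr ⟨(hG r hr).1.ne', (hG r hr).2.ne⟩)
  refine (IsBigO.of_bound 32 ?_).trans_isLittleO hshift
  filter_upwards [eventually_ge_atTop 0, hmean] with r hr hm
  rw [Real.norm_of_nonneg (setIntegral_nonneg_of_ae_restrict ?_), Real.norm_of_nonneg
    ENNReal.toReal_nonneg]
  · exact setIntegral_sq_shrink_sub_le hmeas hr hε hm (hG _ (by positivity)).2.ne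
  · exact Eventually.of_forall fun ω => sq_nonneg _
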